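/- Under hypotheses (P1)–(P3) with f(t,·) of class C¹ and Kγ/α < 1, for each fixed t ≥ 0 the map η ↦ G(t,η) is a C¹ diffeomorphism of ℝⁿ onto ℝⁿ. (Proof via Hadamard's global inverse function theorem: G(t,·) is C¹, its Jacobian determinant never vanishes, and |G(t,η)| → ∞ as |η| → ∞ since |G(t,η) − η| ≤ Kμ/α.) -/

import Mathlib

/-!
By variation of constants, `G(t, η) = Φ(t, 0) y(0; t, η)`: the map sending the value of a solution
of `y' = A y + f(s, y)` at time `t` to its value at time `0`, followed by the invertible `Φ(t, 0)`.
By uniqueness of solutions the flow maps between the times `0` and `t` are mutually inverse.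
The forward one is `C¹`, because its derivative solves the variational equation, whose
solution depends continuously on the initial point by Grönwall's inequality; its inverse is
then `C¹` by the inverse function theorem.
-/

open Real Filter Topology Set
open scoped NNReal

theorem hasDerivAt_clm_of_forall_apply {𝕜 E F : Type*} [NontriviallyNormedField 𝕜]
    [CompleteSpace 𝕜] [NormedAddCommGroup E] [NormedSpace 𝕜 E] [FiniteDimensional 𝕜 E]
    [NormedAddCommGroup F] [NormedSpace 𝕜 F] {P : 𝕜 → E →L[𝕜] F} {P' : E →L[𝕜] F} {t : 𝕜}
    (h : ∀ ξ, HasDerivAt (fun r => P r ξ) (P' ξ) t) : HasDerivAt P P' t := by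
  let e : (E →L[𝕜] F) ≃L[𝕜] (Fin (Module.finrank 𝕜 E) → F) :=
    ((ContinuousLinearEquiv.ofFinrankEq (Module.finrank_fin_fun 𝕜).symm).arrowCongr
      (1 : F ≃L[𝕜] F)).trans (ContinuousLinearEquiv.piRing _)
  have he : HasDerivAt (fun r => e (P r)) (e P') t := hasDerivAt_pi.2 fun i => h _
  simpa [Function.comp_def] using e.symm.hasFDerivAt.comp_hasDerivAt t he

theorem Homeomorph.contDiff_symm_of_differentiable {𝕜 E F : Type*} [NontriviallyNormedField 𝕜]
    [NormedAddCommGroup E] [NormedSpace 𝕜 E] [CompleteSpace E]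
    [NormedAddCommGroup F] [NormedSpace 𝕜 F] {n : WithTop ℕ∞} (f : E ≃ₜ F)
    (hf : ContDiff 𝕜 n f) (hn : n ≠ 0) (hsymm : Differentiable 𝕜 f.symm) :
    ContDiff 𝕜 n f.symm := by
  have hfd : Differentiable 𝕜 f := hf.differentiable hn
  have hleft : ∀ a, (fderiv 𝕜 f.symm (f a)).comp (fderiv 𝕜 f a) = ContinuousLinearMap.id 𝕜 E :=
    fun a => by
      have := (hsymm (f a)).hasFDerivAt.comp a (hfd a).hasFDerivAt
      rw [f.symm_comp_self] at this
      exact this.unique (hasFDerivAt_id a)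
  have hright : ∀ a, (fderiv 𝕜 f a).comp (fderiv 𝕜 f.symm (f a)) = ContinuousLinearMap.id 𝕜 F :=
    fun a => by
      have := (hfd (f.symm (f a))).hasFDerivAt.comp (f a) (hsymm (f a)).hasFDerivAt
      rw [f.self_comp_symm, f.symm_apply_apply] at this
      exact this.unique (hasFDerivAt_id (f a))
  exact f.contDiff_symm (f₀' := fun a => ContinuousLinearEquiv.equivOfInverse (fderiv 𝕜 f a)
      (fderiv 𝕜 f.symm (f a)) (fun x => congr($(hleft a) x)) (fun x => congr($(hright a) x)))
    (fun a => (hfd a).hasFDerivAt) hf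

section EvolutionFamily

variable {E : Type*} [NormedAddCommGroup E] [NormedSpace ℝ E]

structure IsEvolutionFamily (Φ : ℝ → ℝ → E →L[ℝ] E) (A : ℝ → E →L[ℝ] E) : Prop where
  self_eq_id : ∀ s, Φ s s = ContinuousLinearMap.id ℝ E
  comp_eq : ∀ t s r, (Φ t s).comp (Φ s r) = Φ t r
  hasDerivAt_apply : ∀ s ξ t, HasDerivAt (fun r => Φ r s ξ) (A t (Φ t s ξ)) t

namespace IsEvolutionFamily

variable {Φ : ℝ → ℝ → E →L[ℝ] E} {A : ℝ → E →L[ℝ] E}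

theorem mul_eq_one (hΦ : IsEvolutionFamily Φ A) (t s : ℝ) : Φ t s * Φ s t = 1 :=
  (hΦ.comp_eq t s t).trans (hΦ.self_eq_id t)

theorem ringInverse_eq (hΦ : IsEvolutionFamily Φ A) (t s : ℝ) :
    Ring.inverse (Φ t s) = Φ s t :=
  Ring.inverse_unit ⟨Φ t s, Φ s t, hΦ.mul_eq_one t s, hΦ.mul_eq_one s t⟩

def equiv (hΦ : IsEvolutionFamily Φ A) (t s : ℝ) : E ≃L[ℝ] E :=
  ContinuousLinearEquiv.equivOfInverse (Φ t s) (Φ s t)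
    (fun x => congr($(hΦ.mul_eq_one s t) x)) (fun x => congr($(hΦ.mul_eq_one t s) x))

theorem hasDerivAt_fst [FiniteDimensional ℝ E] (hΦ : IsEvolutionFamily Φ A) (s t : ℝ) :
    HasDerivAt (fun r => Φ r s) (A t * Φ t s) t :=
  hasDerivAt_clm_of_forall_apply (hΦ.hasDerivAt_apply s · t)

theorem hasDerivAt_snd [FiniteDimensional ℝ E] (hΦ : IsEvolutionFamily Φ A) (t s : ℝ) :
    HasDerivAt (fun r => Φ t r) (-(Φ t s * A s)) s := by
  have hinv : HasDerivAt (fun r => Φ 0 r) (-(Φ 0 s * A s)) s := by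
    let u : (E →L[ℝ] E)ˣ := ⟨Φ s 0, Φ 0 s, hΦ.mul_eq_one s 0, hΦ.mul_eq_one 0 s⟩
    have hd :=
      (hasFDerivAt_ringInverse (𝕜 := ℝ) u).comp_hasDerivAt s (hΦ.hasDerivAt_fst 0 s)
    simp only [Function.comp_def, hΦ.ringInverse_eq] at hd
    refine hd.congr_deriv ?_
    simp [u, mul_assoc, hΦ.mul_eq_one s 0]
  have hd := (hasDerivAt_const s (Φ t 0)).clm_comp hinv
  simp only [hΦ.comp_eq] at hd
  refine hd.congr_deriv ?_
  simp [← ContinuousLinearMap.mul_def, ← mul_assoc, ← hΦ.comp_eq t 0 s]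

/-- Variation of constants: along `y' = A y + g`, `s ↦ Φ t s (y s)` has derivative
`Φ t s (g s)`. -/
theorem integral_apply_eq_sub [FiniteDimensional ℝ E] (hΦ : IsEvolutionFamily Φ A)
    {y g : ℝ → E} {a b : ℝ} (hab : a ≤ b)
    (hy : ∀ s ∈ Icc a b, HasDerivAt y (A s (y s) + g s) s) (hg : ContinuousOn g (Icc a b))
    (t : ℝ) : ∫ s in a..b, Φ t s (g s) = Φ t b (y b) - Φ t a (y a) := by
  refine intervalIntegral.integral_eq_sub_of_hasDerivAt (f := fun s => Φ t s (y s))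
    (fun s hs => ?_) ?_
  · rw [uIcc_of_le hab] at hs
    refine ((hΦ.hasDerivAt_snd t s).clm_apply (hy s hs)).congr_deriv ?_
    simp
  · refine ContinuousOn.intervalIntegrable ?_
    rw [uIcc_of_le hab]
    exact ContinuousOn.clm_apply
      (fun s _ => (hΦ.hasDerivAt_snd t s).continuousAt.continuousWithinAt) hg

end IsEvolutionFamily

end EvolutionFamily

section LinearODE

variable {E : Type*} [NormedAddCommGroup E] [NormedSpace ℝ E] {L : ℝ≥0} {a b : ℝ}

theorem lipschitzWith_compL_left {B : E →L[ℝ] E} (hB : ‖B‖ ≤ L) :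
    LipschitzWith L fun X : E →L[ℝ] E => B.comp X :=
  LipschitzWith.of_dist_le_mul fun X Y => by
    rw [dist_eq_norm, dist_eq_norm, ← ContinuousLinearMap.comp_sub]
    exact (B.opNorm_comp_le _).trans (mul_le_mul_of_nonneg_right hB (norm_nonneg _))

theorem norm_le_mul_exp_of_hasDerivAt_comp {B X : ℝ → E →L[ℝ] E}
    (hBL : ∀ s ∈ Icc a b, ‖B s‖ ≤ L) (hX : ∀ s ∈ Icc a b, HasDerivAt X ((B s).comp (X s)) s) :
    ∀ s ∈ Icc a b, ‖X s‖ ≤ ‖X a‖ * exp (L * (s - a)) := by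
  intro s hs
  have := norm_le_gronwallBound_of_norm_deriv_right_le
    (fun r hr => (hX r hr).continuousAt.continuousWithinAt)
    (fun r hr => (hX r (Ico_subset_Icc_self hr)).hasDerivWithinAt) le_rfl
    (fun r hr => by
      rw [add_zero]
      exact ((B r).opNorm_comp_le _).trans
        (mul_le_mul_of_nonneg_right (hBL r (Ico_subset_Icc_self hr)) (norm_nonneg _))) s hs
  rwa [gronwallBound_ε0] at this

theorem continuousAt_linearODE_solution {P : Type*} [TopologicalSpace P]
    {B X : P → ℝ → E →L[ℝ] E} {p₀ : P} (hab : a ≤ b)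
    (hB : ContinuousOn (fun q : P × ℝ => B q.1 q.2) (univ ×ˢ Icc a b))
    (hBL : ∀ p, ∀ s ∈ Icc a b, ‖B p s‖ ≤ L)
    (hX : ∀ p, ∀ s ∈ Icc a b, HasDerivAt (X p) ((B p s).comp (X p s)) s)
    (hXa : ∀ p, X p a = X p₀ a) :
    ContinuousAt (fun p => X p b) p₀ := by
  set C := ‖X p₀ a‖ * exp (L * (b - a))
  have hXC : ∀ p, ∀ s ∈ Icc a b, ‖X p s‖ ≤ C := fun p s hs => by
    grw [norm_le_mul_exp_of_hasDerivAt_comp (hBL p) (hX p) s hs, hXa p, hs.2]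
  have hgron : Tendsto (fun δ => gronwallBound 0 L (δ * C) (b - a)) (𝓝 0) (𝓝 0) := by
    have := ((gronwallBound_continuous_ε 0 L (b - a)).comp (continuous_mul_const C)).tendsto 0
    simpa [Function.comp_def, gronwallBound_ε0_δ0] using this
  rw [ContinuousAt, Metric.tendsto_nhds]
  intro ε hε
  obtain ⟨δ, hδε, hδ⟩ := (((hgron.eventually (gt_mem_nhds hε)).filter_mono
    nhdsWithin_le_nhds).and (self_mem_nhdsWithin (s := Ioi 0))).exists
  obtain ⟨U, hU, hBU⟩ := isCompact_Icc.mem_uniformity_of_prod hB (mem_univ p₀)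
    (Metric.dist_mem_uniformity hδ)
  rw [nhdsWithin_univ] at hU
  filter_upwards [hU] with p hp
  -- `X p` solves the equation of `X p₀` up to a defect of at most `δ * C`.
  have hclose : ∀ s ∈ Ico a b,
      dist ((B p s).comp (X p s)) ((B p₀ s).comp (X p s)) ≤ δ * C := by
    intro s hs
    have hs' := Ico_subset_Icc_self hs
    rw [dist_eq_norm, ← ContinuousLinearMap.sub_comp]
    exact ((B p s - B p₀ s).opNorm_comp_le _).trans (mul_le_mul
      (dist_eq_norm (B p s) _ ▸ (hBU p hp s hs').le) (hXC p s hs') (norm_nonneg _) hδ.le)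
  have := dist_le_of_approx_trajectories_ODE_of_mem (v := fun s Y => (B p₀ s).comp Y)
    (s := fun _ => univ) (εg := 0)
    (fun s hs => (lipschitzWith_compL_left (hBL p₀ s (Ico_subset_Icc_self hs))).lipschitzOnWith)
    (fun s hs => (hX p s hs).continuousAt.continuousWithinAt)
    (fun s hs => (hX p s (Ico_subset_Icc_self hs)).hasDerivWithinAt) hclose
    (fun _ _ => mem_univ _) (fun s hs => (hX p₀ s hs).continuousAt.continuousWithinAt)
    (fun s hs => (hX p₀ s (Ico_subset_Icc_self hs)).hasDerivWithinAt)
    (fun s hs => (dist_self _).le) (fun _ _ => mem_univ _)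
    (by rw [hXa p, dist_self]) b ⟨hab, le_rfl⟩
  rw [add_zero] at this
  exact this.trans_lt hδε

end LinearODE

section Flow

variable {E : Type*} [NormedAddCommGroup E] [NormedSpace ℝ E] {v : ℝ → E → E} {L : ℝ≥0}

theorem ODE_solution_eqOn_Icc_of_eq {f g : ℝ → E} {a b c : ℝ}
    (hv : ∀ s ∈ Icc a b, LipschitzWith L (v s)) (hc : c ∈ Icc a b)
    (hf : ∀ s ∈ Icc a b, HasDerivAt f (v s (f s)) s)
    (hg : ∀ s ∈ Icc a b, HasDerivAt g (v s (g s)) s) (heq : f c = g c) :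
    EqOn f g (Icc a b) := by
  have hcont : ∀ {h : ℝ → E}, (∀ s ∈ Icc a b, HasDerivAt h (v s (h s)) s) →
      ContinuousOn h (Icc a b) := fun hh s hs => (hh s hs).continuousAt.continuousWithinAt
  rw [← Icc_union_Icc_eq_Icc hc.1 hc.2]
  refine EqOn.union ?_ ?_
  · have hsub : Icc a c ⊆ Icc a b := Icc_subset_Icc_right hc.2
    exact ODE_solution_unique_of_mem_Icc_left (s := fun _ => univ)
      (fun s hs => (hv s (hsub (Ioc_subset_Icc_self hs))).lipschitzOnWith)
      ((hcont hf).mono hsub)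
      (fun s hs => (hf s (hsub (Ioc_subset_Icc_self hs))).hasDerivWithinAt)
      (fun _ _ => mem_univ _) ((hcont hg).mono hsub)
      (fun s hs => (hg s (hsub (Ioc_subset_Icc_self hs))).hasDerivWithinAt)
      (fun _ _ => mem_univ _) heq
  · have hsub : Icc c b ⊆ Icc a b := Icc_subset_Icc_left hc.1
    exact ODE_solution_unique_of_mem_Icc_right (s := fun _ => univ)
      (fun s hs => (hv s (hsub (Ico_subset_Icc_self hs))).lipschitzOnWith)
      ((hcont hf).mono hsub)
      (fun s hs => (hf s (hsub (Ico_subset_Icc_self hs))).hasDerivWithinAt)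
      (fun _ _ => mem_univ _) ((hcont hg).mono hsub)
      (fun s hs => (hg s (hsub (Ico_subset_Icc_self hs))).hasDerivWithinAt)
      (fun _ _ => mem_univ _) heq

structure IsFlow (v : ℝ → E → E) (y : ℝ → E → ℝ → E) : Prop where
  apply_self : ∀ τ η, y τ η τ = η
  hasDerivAt : ∀ τ η s, 0 ≤ s → HasDerivAt (y τ η) (v s (y τ η s)) s

namespace IsFlow

variable {y : ℝ → E → ℝ → E}

theorem apply_apply (hy : IsFlow v y) (hv : ∀ s, 0 ≤ s → LipschitzWith L (v s))
    {τ σ s : ℝ} (hσ : 0 ≤ σ) (hs : 0 ≤ s) (η : E) : y σ (y τ η σ) s = y τ η s :=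
  ODE_solution_eqOn_Icc_of_eq (fun r hr => hv r hr.1) ⟨hσ, le_max_left σ s⟩
    (fun r hr => hy.hasDerivAt _ _ r hr.1) (fun r hr => hy.hasDerivAt _ _ r hr.1)
    (hy.apply_self _ _) ⟨hs, le_max_right σ s⟩

theorem dist_apply_le (hy : IsFlow v y) (hv : ∀ s, 0 ≤ s → LipschitzWith L (v s))
    {a b s : ℝ} (ha : 0 ≤ a) (hs : s ∈ Icc a b) (ζ η : E) :
    dist (y a ζ s) (y a η s) ≤ exp (L * (b - a)) * dist ζ η := by
  have := dist_le_of_trajectories_ODE_of_mem (s := fun _ => univ) (δ := dist ζ η)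
    (fun r hr => (hv r (ha.trans hr.1)).lipschitzOnWith)
    (fun r hr => (hy.hasDerivAt a ζ r (ha.trans hr.1)).continuousAt.continuousWithinAt)
    (fun r hr => (hy.hasDerivAt a ζ r (ha.trans hr.1)).hasDerivWithinAt) (fun _ _ => mem_univ _)
    (fun r hr => (hy.hasDerivAt a η r (ha.trans hr.1)).continuousAt.continuousWithinAt)
    (fun r hr => (hy.hasDerivAt a η r (ha.trans hr.1)).hasDerivWithinAt) (fun _ _ => mem_univ _)
    (by rw [hy.apply_self, hy.apply_self]) s hs
  grw [this, mul_comm, hs.2]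

theorem continuousOn_uncurry (hy : IsFlow v y) (hv : ∀ s, 0 ≤ s → LipschitzWith L (v s))
    {a b : ℝ} (ha : 0 ≤ a) :
    ContinuousOn (fun q : E × ℝ => y a q.1 q.2) (univ ×ˢ Icc a b) :=
  continuousOn_prod_of_continuousOn_lipschitzOnWith _ (Real.toNNReal (exp (L * (b - a))))
    (fun ζ _ s hs => (hy.hasDerivAt a ζ s (ha.trans hs.1)).continuousAt.continuousWithinAt)
    (fun _ hs => (LipschitzWith.of_dist_le' (hy.dist_apply_le hv ha hs)).lipschitzOnWith)

theorem contDiff_apply (hy : IsFlow v y) (hv : ∀ s, 0 ≤ s → LipschitzWith L (v s))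
    {Dv : ℝ → E → E →L[ℝ] E} (hDv : Continuous fun q : ℝ × E => Dv q.1 q.2)
    (hDvL : ∀ s x, 0 ≤ s → ‖Dv s x‖ ≤ L) {a b : ℝ} (ha : 0 ≤ a) (hab : a ≤ b)
    {Dy : E → ℝ → E →L[ℝ] E} (hDy : ∀ η, HasFDerivAt (fun ζ => y a ζ b) (Dy η b) η)
    (hDya : ∀ η, Dy η a = ContinuousLinearMap.id ℝ E)
    (hDy' : ∀ η, ∀ s ∈ Icc a b, HasDerivAt (Dy η) ((Dv s (y a η s)).comp (Dy η s)) s) :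
    ContDiff ℝ 1 fun ζ => y a ζ b := by
  rw [contDiff_one_iff_fderiv]
  refine ⟨fun η => (hDy η).differentiableAt, ?_⟩
  rw [funext fun η => (hDy η).fderiv, continuous_iff_continuousAt]
  exact fun η => continuousAt_linearODE_solution hab
    (hDv.comp_continuousOn (continuousOn_snd.prodMk (hy.continuousOn_uncurry hv ha)))
    (fun ζ s hs => hDvL s _ (ha.trans hs.1)) hDy' (fun ζ => (hDya ζ).trans (hDya η).symm)

end IsFlow

end Flow

theorem lipschitzWith_clm_add {E : Type*} [NormedAddCommGroup E] [NormedSpace ℝ E]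
    {A : E →L[ℝ] E} {g : E → E} {M γ : ℝ} (hA : ‖A‖ ≤ M)
    (hg : ∀ u v, ‖g u - g v‖ ≤ γ * ‖u - v‖) :
    LipschitzWith (M.toNNReal + γ.toNNReal) fun x => A x + g x :=
  (LipschitzWith.of_dist_le' fun u v => by
      simpa only [dist_eq_norm, ← map_sub] using A.le_of_opNorm_le hA (u - v)).add
    (LipschitzWith.of_dist_le' fun u v => by simpa only [dist_eq_norm] using hg u v)

theorem stmt18_general (n : ℕ) (γ M : ℝ)
    (A : ℝ → (EuclideanSpace ℝ (Fin n)) →L[ℝ] (EuclideanSpace ℝ (Fin n)))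
    (hAcont : Continuous A) (hAbdd : ∀ t, 0 ≤ t → ‖A t‖ ≤ M)
    (Φ : ℝ → ℝ → ((EuclideanSpace ℝ (Fin n)) →L[ℝ] (EuclideanSpace ℝ (Fin n))))
    (hΦid : ∀ s, Φ s s = ContinuousLinearMap.id ℝ (EuclideanSpace ℝ (Fin n)))
    (hΦderiv : ∀ s ξ t, HasDerivAt (fun r => Φ r s ξ) (A t (Φ t s ξ)) t)
    (hΦcocycle : ∀ t s r, (Φ t s).comp (Φ s r) = Φ t r)
    (f : ℝ → (EuclideanSpace ℝ (Fin n)) → (EuclideanSpace ℝ (Fin n)))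
    (hfcont : Continuous fun p : ℝ × (EuclideanSpace ℝ (Fin n)) => f p.1 p.2)
    (hflip : ∀ t u v, 0 ≤ t → ‖f t u - f t v‖ ≤ γ * ‖u - v‖)
    (y : ℝ → (EuclideanSpace ℝ (Fin n)) → ℝ → (EuclideanSpace ℝ (Fin n)))
    (hyinit : ∀ τ η, y τ η τ = η)
    (hyderiv : ∀ τ η t, 0 ≤ t → HasDerivAt (y τ η) (A t (y τ η t) + f t (y τ η t)) t)
    (Df : ℝ → (EuclideanSpace ℝ (Fin n)) → ((EuclideanSpace ℝ (Fin n)) →L[ℝ] (EuclideanSpace ℝ (Fin n))))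
    (hDf : ∀ t x, 0 ≤ t → HasFDerivAt (f t) (Df t x) x)
    (hDfcont : Continuous fun p : ℝ × (EuclideanSpace ℝ (Fin n)) => Df p.1 p.2)
    (Dy : ℝ → (EuclideanSpace ℝ (Fin n)) → ℝ → ((EuclideanSpace ℝ (Fin n)) →L[ℝ] (EuclideanSpace ℝ (Fin n))))
    (hDyinit : ∀ τ η, Dy τ η τ = ContinuousLinearMap.id ℝ (EuclideanSpace ℝ (Fin n)))
    (hDyode : ∀ τ η s, 0 ≤ s →
      HasDerivAt (Dy τ η) ((A s + Df s (y τ η s)).comp (Dy τ η s)) s)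
    (hDy : ∀ τ η s, HasFDerivAt (fun ζ => y τ ζ s) (Dy τ η s) η) :
    ∀ t, 0 ≤ t → ∃ F : (EuclideanSpace ℝ (Fin n)) ≃ₜ (EuclideanSpace ℝ (Fin n)),
      (∀ η : (EuclideanSpace ℝ (Fin n)), F η = η - ∫ s in (0:ℝ)..t, Φ t s (f s (y t η s))) ∧
      ContDiff ℝ 1 (F : (EuclideanSpace ℝ (Fin n)) → (EuclideanSpace ℝ (Fin n))) ∧ ContDiff ℝ 1 (F.symm : (EuclideanSpace ℝ (Fin n)) → (EuclideanSpace ℝ (Fin n))) := by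
  intro t ht
  set L : ℝ≥0 := M.toNNReal + γ.toNNReal
  have hΦ : IsEvolutionFamily Φ A := ⟨hΦid, hΦcocycle, hΦderiv⟩
  have hy : IsFlow (fun s x => A s x + f s x) y := ⟨hyinit, hyderiv⟩
  have hv : ∀ s, 0 ≤ s → LipschitzWith L fun x => A s x + f s x :=
    fun s hs => lipschitzWith_clm_add (hAbdd s hs) (fun u v => hflip s u v hs)
  have hDvL : ∀ s x, 0 ≤ s → ‖A s + Df s x‖ ≤ L := fun s x hs =>
    ((A s).hasFDerivAt.add (hDf s x hs)).le_of_lipschitz (hv s hs)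
  have hforward : ContDiff ℝ 1 fun ξ => y 0 ξ t :=
    hy.contDiff_apply hv (hAcont.fst'.add hDfcont) hDvL le_rfl ht (hDy 0 · t) (hDyinit 0)
      (fun η s hs => hDyode 0 η s hs.1)
  have hbackward : Differentiable ℝ fun η => y t η 0 := fun η => (hDy t η 0).differentiableAt
  let G : EuclideanSpace ℝ (Fin n) ≃ₜ EuclideanSpace ℝ (Fin n) :=
    { toFun := fun ξ => y 0 ξ t
      invFun := fun η => y t η 0
      left_inv := fun ξ => (hy.apply_apply hv ht le_rfl ξ).trans (hyinit 0 ξ)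
      right_inv := fun η => (hy.apply_apply hv le_rfl ht η).trans (hyinit t η)
      continuous_toFun := hforward.continuous
      continuous_invFun := hbackward.continuous }
  refine ⟨G.symm.trans (hΦ.equiv t 0).toHomeomorph, fun η => ?_,
    (hΦ.equiv t 0).contDiff.comp (G.contDiff_symm_of_differentiable hforward one_ne_zero hbackward),
    hforward.comp (hΦ.equiv t 0).symm.contDiff⟩
  have hg : ContinuousOn (fun s => f s (y t η s)) (Icc 0 t) :=
    hfcont.comp_continuousOn (continuousOn_id.prodMk
      fun s hs => (hyderiv t η s hs.1).continuousAt.continuousWithinAt)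
  rw [hΦ.integral_apply_eq_sub ht (fun s hs => hyderiv t η s hs.1) hg, hΦ.self_eq_id, hyinit]
  simp [G, IsEvolutionFamily.equiv]

theorem stmt18 (n : ℕ) (K α γ μ M : ℝ)
    (hK : 1 ≤ K) (hα : 0 < α) (hγ : 0 < γ) (hμ : 0 < μ) (hM : 0 < M)
    (A : ℝ → (EuclideanSpace ℝ (Fin n)) →L[ℝ] (EuclideanSpace ℝ (Fin n)))
    (hAcont : Continuous A) (hAbdd : ∀ t, 0 ≤ t → ‖A t‖ ≤ M)
    (Φ : ℝ → ℝ → ((EuclideanSpace ℝ (Fin n)) →L[ℝ] (EuclideanSpace ℝ (Fin n))))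
    (hΦid : ∀ s, Φ s s = ContinuousLinearMap.id ℝ (EuclideanSpace ℝ (Fin n)))
    (hΦderiv : ∀ s ξ t, HasDerivAt (fun r => Φ r s ξ) (A t (Φ t s ξ)) t)
    (hΦcocycle : ∀ t s r, (Φ t s).comp (Φ s r) = Φ t r)
    (hΦdecay : ∀ s t, 0 ≤ s → s ≤ t → ‖Φ t s‖ ≤ K * Real.exp (-α * (t - s)))
    (f : ℝ → (EuclideanSpace ℝ (Fin n)) → (EuclideanSpace ℝ (Fin n)))
    (hfcont : Continuous fun p : ℝ × (EuclideanSpace ℝ (Fin n)) => f p.1 p.2)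
    (hflip : ∀ t u v, 0 ≤ t → ‖f t u - f t v‖ ≤ γ * ‖u - v‖)
    (hfbdd : ∀ t u, 0 ≤ t → ‖f t u‖ ≤ μ)
    (hsmall : K * γ / α < 1)
    (y : ℝ → (EuclideanSpace ℝ (Fin n)) → ℝ → (EuclideanSpace ℝ (Fin n)))
    (hyinit : ∀ τ η, y τ η τ = η)
    (hyderiv : ∀ τ η t, 0 ≤ t → HasDerivAt (y τ η) (A t (y τ η t) + f t (y τ η t)) t)
    (Df : ℝ → (EuclideanSpace ℝ (Fin n)) → ((EuclideanSpace ℝ (Fin n)) →L[ℝ] (EuclideanSpace ℝ (Fin n))))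
    (hDf : ∀ t x, 0 ≤ t → HasFDerivAt (f t) (Df t x) x)
    (hDfcont : Continuous fun p : ℝ × (EuclideanSpace ℝ (Fin n)) => Df p.1 p.2)
    (Dy : ℝ → (EuclideanSpace ℝ (Fin n)) → ℝ → ((EuclideanSpace ℝ (Fin n)) →L[ℝ] (EuclideanSpace ℝ (Fin n))))
    (hDyinit : ∀ τ η, Dy τ η τ = ContinuousLinearMap.id ℝ (EuclideanSpace ℝ (Fin n)))
    (hDyode : ∀ τ η s, 0 ≤ s →
      HasDerivAt (Dy τ η) ((A s + Df s (y τ η s)).comp (Dy τ η s)) s)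
    (hDy : ∀ τ η s, HasFDerivAt (fun ζ => y τ ζ s) (Dy τ η s) η) :
    ∀ t, 0 ≤ t → ∃ F : (EuclideanSpace ℝ (Fin n)) ≃ₜ (EuclideanSpace ℝ (Fin n)),
      (∀ η : (EuclideanSpace ℝ (Fin n)), F η = η - ∫ s in (0:ℝ)..t, Φ t s (f s (y t η s))) ∧
      ContDiff ℝ 1 (F : (EuclideanSpace ℝ (Fin n)) → (EuclideanSpace ℝ (Fin n))) ∧ ContDiff ℝ 1 (F.symm : (EuclideanSpace ℝ (Fin n)) → (EuclideanSpace ℝ (Fin n))) :=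
  stmt18_general n γ M A hAcont hAbdd Φ hΦid hΦderiv hΦcocycle f hfcont hflip y hyinit hyderiv Df
    hDf hDfcont Dy hDyinit hDyode hDy
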